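/- arXiv:2404.05808 — 4 statements merged into one kernel-verified Lean document; each statement's English description precedes it below -/
import Mathlib

section
/- Let H be the set of non-increasing probability density functions on (0,1), i.e., measurable functions g : (0,1) → [0,∞) with ∫₀¹ g(y) dy = 1 that agree almost everywhere with a non-increasing function. Then H is complete with respect to the Hellinger distance: every sequence (gₙ) in H that is Cauchy with respect to d_H converges in d_H to some g ∈ H. -/
open MeasureTheory

/-- The Hellinger distance between two density functions on (0,1):
`d_H(g₁,g₂) = sqrt( (1/2) ∫₀¹ (√g₁(y) - √g₂(y))² dy )`. -/
noncomputable def hellingerDist (g₁ g₂ : ℝ → ℝ) : ℝ :=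
  Real.sqrt ((1 / 2) * ∫ y in Set.Ioo (0 : ℝ) 1, (Real.sqrt (g₁ y) - Real.sqrt (g₂ y)) ^ 2)

/-- `g` belongs to the class `H` of non-increasing probability density functions on (0,1):
it is measurable, nonnegative on (0,1), integrates to 1 over (0,1), and agrees
Lebesgue-almost everywhere on (0,1) with a non-increasing function. -/
def MemH (g : ℝ → ℝ) : Prop :=
  Measurable g ∧ (∀ y ∈ Set.Ioo (0 : ℝ) 1, 0 ≤ g y) ∧
    IntegrableOn g (Set.Ioo (0 : ℝ) 1) ∧
    (∫ y in Set.Ioo (0 : ℝ) 1, g y) = 1 ∧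
    ∃ g' : ℝ → ℝ,
      (∀ x ∈ Set.Ioo (0 : ℝ) 1, ∀ y ∈ Set.Ioo (0 : ℝ) 1, x ≤ y → g' y ≤ g' x) ∧
      (∀ᵐ y ∂(volume.restrict (Set.Ioo (0 : ℝ) 1)), g y = g' y)


/-! The map `g ↦ √g` is, up to the factor `1/√2`, an isometry from `H` with the Hellinger
distance into the unit sphere of `L²(0,1)`, which is complete. So the square roots of a
Hellinger-Cauchy sequence converge in `L²` to some `F`, and it remains to show `F² ∈ H`.
Its integral is `‖F‖² = 1`. Along a subsequence `√gₙ → F` almost everywhere, so `F²` is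
non-increasing on a set of full measure; such a set is dense in `(0,1)`, and a function
that is antitone on a dense subset extends to an antitone function on `(0,1)`. -/

open Set Filter Topology

theorem AntitoneOn.exists_antitoneOn_eqOn {α : Type*} [LinearOrder α] {f : α → ℝ} {S I : Set α}
    (hf : AntitoneOn f S) (hlow : ∀ y ∈ I, ∃ s ∈ S, s ≤ y) (hup : ∀ y ∈ I, ∃ s ∈ S, y ≤ s) :
    ∃ g : α → ℝ, AntitoneOn g I ∧ EqOn f g S := by
  -- Extend in `EReal`, where no boundedness is needed; on `I` the extension is finite
  -- because every point of `I` lies between two points of `S`.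
  have hf' : AntitoneOn (fun x => (f x : EReal)) S := fun x hx y hy hxy =>
    EReal.coe_le_coe_iff.2 (hf hx hy hxy)
  obtain ⟨G, hG, hfG⟩ := hf'.exists_antitone_extension (OrderBot.bddBelow _) (OrderTop.bddAbove _)
  have hfinite : ∀ y ∈ I, G y ≠ ⊤ ∧ G y ≠ ⊥ := by
    intro y hy
    obtain ⟨s, hs, hsy⟩ := hlow y hy
    obtain ⟨t, ht, hyt⟩ := hup y hy
    refine ⟨ne_top_of_le_ne_top ?_ (hG hsy), ne_bot_of_le_ne_bot ?_ (hG hyt)⟩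
    · rw [← hfG hs]; exact EReal.coe_ne_top _
    · rw [← hfG ht]; exact EReal.coe_ne_bot _
  refine ⟨fun x => (G x).toReal, fun x hx y hy hxy => ?_, fun x hx => ?_⟩
  · exact EReal.toReal_le_toReal (hG hxy) (hfinite y hy).2 (hfinite x hx).1
  · simp [← hfG hx]

theorem nonempty_inter_Ioo_of_ae_restrict_mem {S : Set ℝ} {a b c d : ℝ}
    (hS : ∀ᵐ x ∂volume.restrict (Ioo a b), x ∈ S) (hac : a ≤ c) (hcd : c < d) (hdb : d ≤ b) :
    (S ∩ Ioo c d).Nonempty := by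
  have hpos : volume.restrict (Ioo a b) (Ioo c d) ≠ 0 := by
    rw [Measure.restrict_apply measurableSet_Ioo,
      inter_eq_self_of_subset_left (Ioo_subset_Ioo hac hdb), Real.volume_Ioo]
    simpa using hcd
  obtain ⟨x, hx, hxS⟩ := Measure.exists_mem_of_measure_ne_zero_of_ae hpos (ae_restrict_of_ae hS)
  exact ⟨x, hxS, hx⟩

theorem exists_antitoneOn_ae_eq_of_ae_tendsto {a b : ℝ} {u : ℕ → ℝ → ℝ} {v : ℝ → ℝ}
    (hu : ∀ n, ∃ w : ℝ → ℝ, AntitoneOn w (Ioo a b) ∧ u n =ᵐ[volume.restrict (Ioo a b)] w)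
    (hlim : ∀ᵐ x ∂volume.restrict (Ioo a b), Tendsto (fun n => u n x) atTop (𝓝 (v x))) :
    ∃ w : ℝ → ℝ, AntitoneOn w (Ioo a b) ∧ v =ᵐ[volume.restrict (Ioo a b)] w := by
  choose w hw_anti hw_ae using hu
  set S := {x | x ∈ Ioo a b ∧ Tendsto (fun n => u n x) atTop (𝓝 (v x)) ∧ ∀ n, u n x = w n x}
  have hS : ∀ᵐ x ∂volume.restrict (Ioo a b), x ∈ S := by
    filter_upwards [ae_restrict_mem measurableSet_Ioo, hlim, ae_all_iff.2 hw_ae]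
      with x hxI hx hxw using ⟨hxI, hx, hxw⟩
  have hvS : AntitoneOn v S := by
    rintro x ⟨hxI, hx, hxw⟩ y ⟨hyI, hy, hyw⟩ hxy
    refine le_of_tendsto_of_tendsto' hy hx fun n => ?_
    rw [hxw, hyw]
    exact hw_anti n hxI hyI hxy
  obtain ⟨g, hg, hvg⟩ := hvS.exists_antitoneOn_eqOn (I := Ioo a b)
    (fun y hy => (nonempty_inter_Ioo_of_ae_restrict_mem hS le_rfl hy.1 hy.2.le).imp
      fun s hs => ⟨hs.1, hs.2.2.le⟩)
    (fun y hy => (nonempty_inter_Ioo_of_ae_restrict_mem hS hy.1.le hy.2 le_rfl).imp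
      fun s hs => ⟨hs.1, hs.2.1.le⟩)
  exact ⟨g, hg, hS.mono fun x hx => hvg hx⟩

theorem MeasureTheory.L2.norm_sq_eq_integral_sq {α : Type*} [MeasurableSpace α] {μ : Measure α}
    (f : Lp ℝ 2 μ) : ‖f‖ ^ 2 = ∫ a, f a ^ 2 ∂μ := by
  rw [← real_inner_self_eq_norm_sq, L2.inner_def]
  simp [sq]

theorem MeasureTheory.L2.dist_sq_eq_integral_sq {α : Type*} [MeasurableSpace α]
    {μ : Measure α} (f g : Lp ℝ 2 μ) : dist f g ^ 2 = ∫ a, (f a - g a) ^ 2 ∂μ := by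
  rw [dist_eq_norm, L2.norm_sq_eq_integral_sq]
  refine integral_congr_ae ?_
  filter_upwards [Lp.coeFn_sub f g] with a ha
  rw [ha, Pi.sub_apply]

local notation "μ₀₁" => volume.restrict (Ioo (0 : ℝ) 1)

theorem hellingerDist_eq_dist {φ ψ : ℝ → ℝ} (A B : Lp ℝ 2 μ₀₁)
    (hA : A =ᵐ[μ₀₁] fun y => √(φ y)) (hB : B =ᵐ[μ₀₁] fun y => √(ψ y)) :
    hellingerDist φ ψ = √(1 / 2) * dist A B := by
  have hint : ∫ y in Ioo (0 : ℝ) 1, (√(φ y) - √(ψ y)) ^ 2 = ∫ y, (A y - B y) ^ 2 ∂μ₀₁ := by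
    refine integral_congr_ae ?_
    filter_upwards [hA, hB] with y hAy hBy
    rw [hAy, hBy]
  rw [hellingerDist, hint, ← L2.dist_sq_eq_integral_sq, Real.sqrt_mul (by norm_num),
    Real.sqrt_sq dist_nonneg]

namespace MemH

variable {g : ℝ → ℝ}

theorem sq_sqrt_ae_eq (hg : MemH g) : (fun y => √(g y) ^ 2) =ᵐ[μ₀₁] g := by
  filter_upwards [ae_restrict_mem measurableSet_Ioo] with y hy
  exact Real.sq_sqrt (hg.2.1 y hy)

theorem memLp_sqrt (hg : MemH g) : MemLp (fun y => √(g y)) 2 μ₀₁ :=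
  (memLp_two_iff_integrable_sq hg.1.sqrt.aestronglyMeasurable).2
    (hg.2.2.1.congr hg.sq_sqrt_ae_eq.symm)

noncomputable def sqrtL2 (hg : MemH g) : Lp ℝ 2 μ₀₁ :=
  hg.memLp_sqrt.toLp _

theorem sqrtL2_ae_eq (hg : MemH g) : hg.sqrtL2 =ᵐ[μ₀₁] fun y => √(g y) :=
  hg.memLp_sqrt.coeFn_toLp

theorem norm_sqrtL2 (hg : MemH g) : ‖hg.sqrtL2‖ = 1 := by
  have hsq : ‖hg.sqrtL2‖ ^ 2 = 1 := by
    rw [L2.norm_sq_eq_integral_sq]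
    refine (integral_congr_ae ?_).trans hg.2.2.2.1
    filter_upwards [hg.sqrtL2_ae_eq, hg.sq_sqrt_ae_eq] with y hy hy'
    rw [hy, hy']
  nlinarith [norm_nonneg hg.sqrtL2]

theorem hellingerDist_eq_dist_sqrtL2 {g₁ g₂ : ℝ → ℝ} (h₁ : MemH g₁) (h₂ : MemH g₂) :
    hellingerDist g₁ g₂ = √(1 / 2) * dist h₁.sqrtL2 h₂.sqrtL2 :=
  hellingerDist_eq_dist _ _ h₁.sqrtL2_ae_eq h₂.sqrtL2_ae_eq

end MemH

section Limit

variable {g : ℕ → ℝ → ℝ} (hg : ∀ n, MemH (g n)) {F : Lp ℝ 2 μ₀₁}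

theorem exists_ae_tendsto_sqrt_of_tendsto_sqrtL2
    (hF : Tendsto (fun n => (hg n).sqrtL2) atTop (𝓝 F)) :
    ∃ ns : ℕ → ℕ, ∀ᵐ x ∂μ₀₁, Tendsto (fun i => √(g (ns i) x)) atTop (𝓝 (F x)) := by
  obtain ⟨ns, -, hae⟩ := (tendstoInMeasure_of_tendsto_Lp hF).exists_seq_tendsto_ae
  refine ⟨ns, ?_⟩
  filter_upwards [hae, ae_all_iff.2 fun n => (hg n).sqrtL2_ae_eq] with x hx hxg
  simpa only [hxg] using hx

theorem ae_nonneg_of_tendsto_sqrtL2 (hF : Tendsto (fun n => (hg n).sqrtL2) atTop (𝓝 F)) :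
    0 ≤ᵐ[μ₀₁] F := by
  obtain ⟨ns, hns⟩ := exists_ae_tendsto_sqrt_of_tendsto_sqrtL2 hg hF
  filter_upwards [hns] with x hx using ge_of_tendsto' hx fun i => Real.sqrt_nonneg _

theorem memH_sq_of_tendsto_sqrtL2 (hF : Tendsto (fun n => (hg n).sqrtL2) atTop (𝓝 F)) :
    MemH fun y => F y ^ 2 := by
  refine ⟨(Lp.stronglyMeasurable F).measurable.pow_const 2, fun y _ => sq_nonneg _,
    (memLp_two_iff_integrable_sq (Lp.aestronglyMeasurable F)).1 (Lp.memLp F), ?_, ?_⟩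
  · have hnorm : ‖F‖ = 1 :=
      tendsto_nhds_unique hF.norm (by simp only [MemH.norm_sqrtL2, tendsto_const_nhds])
    rw [← L2.norm_sq_eq_integral_sq, hnorm, one_pow]
  · obtain ⟨ns, hns⟩ := exists_ae_tendsto_sqrt_of_tendsto_sqrtL2 hg hF
    refine exists_antitoneOn_ae_eq_of_ae_tendsto (u := fun i => g (ns i))
      (fun i => (hg (ns i)).2.2.2.2) ?_
    filter_upwards [hns, ae_all_iff.2 fun i => (hg (ns i)).sq_sqrt_ae_eq] with x hx hxg
    simpa only [hxg] using hx.pow 2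

end Limit

/-- The class `H` of non-increasing probability densities on (0,1) is complete with respect
to the Hellinger distance: every Cauchy sequence in `H` converges in Hellinger distance to
an element of `H`. -/
theorem H_complete_hellinger (g : ℕ → ℝ → ℝ) (hg : ∀ n, MemH (g n))
    (hcauchy : ∀ ε > 0, ∃ N : ℕ, ∀ m ≥ N, ∀ n ≥ N, hellingerDist (g m) (g n) < ε) :
    ∃ glim : ℝ → ℝ, MemH glim ∧
      Filter.Tendsto (fun n => hellingerDist (g n) glim) Filter.atTop (nhds 0) := by
  have hcs : CauchySeq fun n => (hg n).sqrtL2 := by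
    refine Metric.cauchySeq_iff.2 fun ε hε => ?_
    obtain ⟨N, hN⟩ := hcauchy (√(1 / 2) * ε) (by positivity)
    refine ⟨N, fun m hm n hn => lt_of_mul_lt_mul_left ?_ (Real.sqrt_nonneg (1 / 2))⟩
    rw [← MemH.hellingerDist_eq_dist_sqrtL2]
    exact hN m hm n hn
  obtain ⟨F, hF⟩ := cauchySeq_tendsto_of_complete hcs
  have hF_sqrt : F =ᵐ[μ₀₁] fun y => √(F y ^ 2) := by
    filter_upwards [ae_nonneg_of_tendsto_sqrtL2 hg hF] with y hy
    exact (Real.sqrt_sq hy).symm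
  refine ⟨_, memH_sq_of_tendsto_sqrtL2 hg hF, ?_⟩
  have hdist := (tendsto_iff_dist_tendsto_zero.1 hF).const_mul √(1 / 2)
  rw [mul_zero] at hdist
  exact hdist.congr fun n => (hellingerDist_eq_dist _ _ (hg n).sqrtL2_ae_eq hF_sqrt).symm
end

section
/- Let (Ω, F, P) be a probability space, m ≥ 1, and for j = 1, …, m let θ_j : Ω → {0,1} be F-measurable random variables (θ_j = 1 indicating that null hypothesis H_{0j} is true). Let G ⊆ F be a sub-σ-algebra and T_j = E[θ_j | G] (the replicability local index of significance). Let δ_j : Ω → {0,1} be G-measurable rejection indicators, R = Σ_{j=1}^m δ_j the number of rejections and V = Σ_{j=1}^m δ_j θ_j the number of false rejections. Then (a) E[V / max(R,1)] = E[(Σ_{j=1}^m δ_j T_j) / max(R,1)]; and (b) if moreover Σ_{j=1}^m δ_j T_j ≤ q · R holds almost surely for some q ∈ [0,1], then the false discovery rate satisfies FDR = E[V / max(R,1)] ≤ q. -/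
/-!
Given the data `G`, the weight `δ j / max(R, 1)` is known, so by the pull-out property of
conditional expectation `E[δ j θ j / max(R, 1)] = E[δ j T j / max(R, 1)]`; summing over `j`
gives (a). For (b), the integrand on the right of (a) is almost surely at most `q`.
-/

open MeasureTheory

section

variable {Ω : Type*} {m m0 : MeasurableSpace Ω} {μ : Measure Ω}

theorem integral_mul_condExp_of_stronglyMeasurable_left (hm : m ≤ m0)
    [SigmaFinite (μ.trim hm)] {f g : Ω → ℝ} (hf : StronglyMeasurable[m] f)
    (hfg : Integrable (f * g) μ) (hg : Integrable g μ) :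
    ∫ ω, f ω * μ[g|m] ω ∂μ = ∫ ω, f ω * g ω ∂μ :=
  calc ∫ ω, f ω * μ[g|m] ω ∂μ = ∫ ω, μ[f * g|m] ω ∂μ :=
        integral_congr_ae (condExp_mul_of_stronglyMeasurable_left hf hfg hg).symm
    _ = ∫ ω, f ω * g ω ∂μ := integral_condExp hm

theorem integral_sum_mul_condExp_of_bounded [IsFiniteMeasure μ] (hm : m ≤ m0) {ι : Type*}
    (s : Finset ι) {f g : ι → Ω → ℝ} {C : ℝ} (hf : ∀ i, StronglyMeasurable[m] (f i))
    (hfC : ∀ i ω, ‖f i ω‖ ≤ C) (hg : ∀ i, Integrable (g i) μ) :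
    ∫ ω, ∑ i ∈ s, f i ω * μ[g i|m] ω ∂μ = ∫ ω, ∑ i ∈ s, f i ω * g i ω ∂μ := by
  have hf' : ∀ i, AEStronglyMeasurable (f i) μ := fun i => ((hf i).mono hm).aestronglyMeasurable
  have hfg : ∀ i, Integrable (fun ω => f i ω * g i ω) μ := fun i =>
    (hg i).bdd_mul (hf' i) (ae_of_all _ (hfC i))
  rw [integral_finsetSum _ fun i _ => integrable_condExp.bdd_mul (hf' i) (ae_of_all _ (hfC i)),
    integral_finsetSum _ fun i _ => hfg i]
  exact Finset.sum_congr rfl fun i _ =>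
    integral_mul_condExp_of_stronglyMeasurable_left hm (hf i) (hfg i) (hg i)

theorem integral_le_of_ae_le_const [IsProbabilityMeasure μ] {f : Ω → ℝ} {c : ℝ} (hc : 0 ≤ c)
    (hf : ∀ᵐ ω ∂μ, f ω ≤ c) : ∫ ω, f ω ∂μ ≤ c := by
  by_cases hint : Integrable f μ
  · simpa using integral_mono_ae hint (integrable_const c) hf
  · simpa [integral_undef hint] using hc

end

theorem norm_div_max_one_le_one {a : ℝ} (b : ℝ) (ha : |a| ≤ 1) : ‖a / max b 1‖ ≤ 1 := by
  have hpos : (0 : ℝ) < max b 1 := lt_max_of_lt_right one_pos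
  rw [Real.norm_eq_abs, abs_div, abs_of_pos hpos, div_le_one hpos]
  exact ha.trans (le_max_right _ _)

/-- Oracle FDR control via the local index of significance.  Let `θ j` be `{0,1}`-valued
indicators that hypothesis `j` is null, `G` a sub-σ-algebra (the data), `T j = E[θ j | G]`
the posterior probability of being null, and `δ j` `G`-measurable `{0,1}`-valued rejection
indicators with `R = Σ δ j` rejections and `V = Σ δ j θ j` false rejections.  Then
(a) `E[V / max(R,1)] = E[(Σ δ j T j) / max(R,1)]`, and
(b) if `Σ δ j T j ≤ q R` almost surely for some `q ∈ [0,1]`, then the false discovery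
rate `E[V / max(R,1)]` is at most `q`. -/
theorem oracle_fdr_control {Ω : Type*} [m0 : MeasurableSpace Ω]
    (P : Measure Ω) [IsProbabilityMeasure P]
    (m : ℕ) (θ : Fin m → Ω → ℝ)
    (hθmeas : ∀ j, Measurable (θ j)) (hθ01 : ∀ j ω, θ j ω = 0 ∨ θ j ω = 1)
    (G : MeasurableSpace Ω) (hG : G ≤ m0)
    (δ : Fin m → Ω → ℝ) (hδmeas : ∀ j, Measurable[G] (δ j))
    (hδ01 : ∀ j ω, δ j ω = 0 ∨ δ j ω = 1)
    (T : Fin m → Ω → ℝ) (hT : ∀ j, T j = P[θ j|G])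
    (R V : Ω → ℝ) (hR : R = fun ω => ∑ j, δ j ω)
    (hV : V = fun ω => ∑ j, δ j ω * θ j ω) (q : ℝ) :
    (∫ ω, V ω / max (R ω) 1 ∂P) = (∫ ω, (∑ j, δ j ω * T j ω) / max (R ω) 1 ∂P) ∧
    (0 ≤ q → q ≤ 1 → (∀ᵐ ω ∂P, (∑ j, δ j ω * T j ω) ≤ q * R ω) →
      (∫ ω, V ω / max (R ω) 1 ∂P) ≤ q) := by
  subst hR hV
  obtain rfl : T = fun j => P[θ j|G] := funext hT
  have hθint : ∀ j, Integrable (θ j) P := fun j =>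
    .of_bound (hθmeas j).aestronglyMeasurable 1
      (ae_of_all _ fun ω => by rcases hθ01 j ω with h | h <;> simp [h])
  have hweight : ∀ j, StronglyMeasurable[G] fun ω => δ j ω / max (∑ k, δ k ω) 1 := fun j =>
    ((hδmeas j).div ((Finset.measurable_sum _ fun k _ => hδmeas k).max
      measurable_const)).stronglyMeasurable
  have hweight_le : ∀ j ω, ‖δ j ω / max (∑ k, δ k ω) 1‖ ≤ 1 := fun j ω =>
    norm_div_max_one_le_one _ (by rcases hδ01 j ω with h | h <;> simp [h])
  have ha : ∫ ω, (∑ j, δ j ω * θ j ω) / max (∑ j, δ j ω) 1 ∂P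
      = ∫ ω, (∑ j, δ j ω * P[θ j|G] ω) / max (∑ j, δ j ω) 1 ∂P := by
    simp_rw [Finset.sum_div, mul_div_right_comm]
    exact (integral_sum_mul_condExp_of_bounded hG _ hweight hweight_le hθint).symm
  refine ⟨ha, fun hq0 _ hqR => ha ▸ integral_le_of_ae_le_const hq0 ?_⟩
  filter_upwards [hqR] with ω h
  rw [div_le_iff₀ (lt_max_of_lt_right one_pos)]
  exact h.trans (mul_le_mul_of_nonneg_left (le_max_left _ _) hq0)
end

section
/- Let t, t̂ : ℕ → ℝ with t non-decreasing and 0 ≤ t_j ≤ 1 for all j, and let 1 ≤ R < R̂ be integers. Then t_{R+1} − (1/R) Σ_{j=1}^{R} t_j ≥ 0, and |(1/R̂) Σ_{j=1}^{R̂} t̂_j − (1/R) Σ_{j=1}^{R} t_j| ≥ (1 − R/R̂) · (t_{R+1} − (1/R) Σ_{j=1}^{R} t_j) − (1/R̂) |Σ_{j=1}^{R̂} (t̂_j − t_j)|. -/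
/-!
Split the first `R̂` terms into the first `R` and the next `R̂ - R`. Each of the latter is at
least `t (R+1)` by monotonicity, and the exact identity
`(S₁ + S₂)/R̂ - S₁/R = (1 - R/R̂) (c - S₁/R) + (S₂ - (R̂ - R) c)/R̂` (with `c = t (R+1)`)
turns this into the lower bound on the gap between the two averages of `t`. Replacing `t` by `t̂`
in the longer average perturbs it by `(1/R̂) Σ (t̂ j - t j)`, which costs at most its absolute
value.
-/

open Finset

section MonotoneSums

variable {M : Type*} [AddCommMonoid M] [PartialOrder M] [IsOrderedAddMonoid M]
  {t : ℕ → M}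

theorem sum_Icc_one_le_nsmul_of_monotoneOn (ht : MonotoneOn t (Set.Ici 1)) (R : ℕ) :
    ∑ j ∈ Icc 1 R, t j ≤ R • t (R + 1) := by
  simpa using sum_le_card_nsmul (Icc 1 R) t (t (R + 1)) fun j hj =>
    ht (mem_Icc.mp hj).1 (by simp) (by grind)

theorem nsmul_le_sum_Ioc_of_monotoneOn (ht : MonotoneOn t (Set.Ici 1)) (R Rhat : ℕ) :
    (Rhat - R) • t (R + 1) ≤ ∑ j ∈ Ioc R Rhat, t j := by
  simpa using card_nsmul_le_sum (Ioc R Rhat) t (t (R + 1)) fun j hj =>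
    ht (by simp) (by grind) (by grind)

end MonotoneSums

theorem sum_Icc_one_add_sum_Ioc {M : Type*} [AddCommMonoid M] (f : ℕ → M) {R Rhat : ℕ}
    (h : R ≤ Rhat) : ∑ j ∈ Icc 1 R, f j + ∑ j ∈ Ioc R Rhat, f j = ∑ j ∈ Icc 1 Rhat, f j := by
  simpa [← Icc_add_one_left_eq_Ioc] using sum_Ioc_consecutive f (Nat.zero_le R) h

theorem one_sub_div_mul_sub_average_le_average_sub_average {t : ℕ → ℝ}
    (ht : MonotoneOn t (Set.Ici 1)) {R Rhat : ℕ} (hR : 0 < R) (hRRhat : R < Rhat) :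
    (1 - (R : ℝ) / Rhat) * (t (R + 1) - 1 / (R : ℝ) * ∑ j ∈ Icc 1 R, t j)
      ≤ 1 / (Rhat : ℝ) * ∑ j ∈ Icc 1 Rhat, t j - 1 / (R : ℝ) * ∑ j ∈ Icc 1 R, t j := by
  have hR' : (R : ℝ) ≠ 0 := by exact_mod_cast hR.ne'
  have hRhat : (Rhat : ℝ) ≠ 0 := by exact_mod_cast (hR.trans hRRhat).ne'
  have htail : ((Rhat : ℝ) - R) * t (R + 1) ≤ ∑ j ∈ Ioc R Rhat, t j := by
    simpa [Nat.cast_sub hRRhat.le] using nsmul_le_sum_Ioc_of_monotoneOn ht R Rhat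
  rw [← sum_Icc_one_add_sum_Ioc t hRRhat.le]
  calc _ ≤ _ + 1 / (Rhat : ℝ) * (∑ j ∈ Ioc R Rhat, t j - ((Rhat : ℝ) - R) * t (R + 1)) :=
        le_add_of_nonneg_right (mul_nonneg (by positivity) (sub_nonneg.mpr htail))
    _ = _ := by field_simp; ring

theorem sorted_average_gap_lower_bound_general
    (t that : ℕ → ℝ) (hmono : ∀ j k, 1 ≤ j → j ≤ k → t j ≤ t k)
    (R Rhat : ℕ) (hR : 1 ≤ R) (hRRhat : R < Rhat) :
    0 ≤ t (R + 1) - (1 / (R : ℝ)) * ∑ j ∈ Finset.Icc 1 R, t j ∧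
    (1 - (R : ℝ) / (Rhat : ℝ)) *
        (t (R + 1) - (1 / (R : ℝ)) * ∑ j ∈ Finset.Icc 1 R, t j)
      - (1 / (Rhat : ℝ)) * |∑ j ∈ Finset.Icc 1 Rhat, (that j - t j)|
      ≤ |(1 / (Rhat : ℝ)) * ∑ j ∈ Finset.Icc 1 Rhat, that j
          - (1 / (R : ℝ)) * ∑ j ∈ Finset.Icc 1 R, t j| := by
  have ht : MonotoneOn t (Set.Ici 1) := fun j hj k _ hjk => hmono j k hj hjk
  have hR' : (0 : ℝ) < R := by exact_mod_cast hR
  refine ⟨?_, ?_⟩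
  · rw [sub_nonneg, one_div, inv_mul_le_iff₀ hR']
    simpa using sum_Icc_one_le_nsmul_of_monotoneOn ht R
  · have hgap := one_sub_div_mul_sub_average_le_average_sub_average ht hR hRRhat
    have hperturb : 1 / (Rhat : ℝ) * ∑ j ∈ Icc 1 Rhat, that j
        = 1 / (Rhat : ℝ) * ∑ j ∈ Icc 1 Rhat, t j
          + 1 / (Rhat : ℝ) * ∑ j ∈ Icc 1 Rhat, (that j - t j) := by
      rw [sum_sub_distrib]; ring
    have hRhat : (0 : ℝ) ≤ 1 / Rhat := by positivity
    rw [hperturb, add_sub_right_comm]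
    calc _ ≤ _ - |1 / (Rhat : ℝ) * ∑ j ∈ Icc 1 Rhat, (that j - t j)| := by
          rw [abs_mul, abs_of_nonneg hRhat]; linarith
      _ ≤ _ := (sub_le_sub_right (le_abs_self _) _).trans (abs_sub_abs_le_abs_add _ _)

/-- Deterministic inequality comparing the averages of the `R` smallest oracle statistics
and the `R̂` smallest plug-in statistics when `R < R̂`: for a non-decreasing `[0,1]`-valued
sequence `t` and arbitrary `t̂`, one has `t (R+1) − (1/R) Σ_{j=1}^R t j ≥ 0` and
`|(1/R̂) Σ_{j=1}^{R̂} t̂ j − (1/R) Σ_{j=1}^R t j|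
   ≥ (1 − R/R̂) (t (R+1) − (1/R) Σ_{j=1}^R t j) − (1/R̂) |Σ_{j=1}^{R̂} (t̂ j − t j)|`. -/
theorem sorted_average_gap_lower_bound
    (t that : ℕ → ℝ) (hmono : ∀ j k, 1 ≤ j → j ≤ k → t j ≤ t k)
    (hbound : ∀ j, 1 ≤ j → 0 ≤ t j ∧ t j ≤ 1)
    (R Rhat : ℕ) (hR : 1 ≤ R) (hRRhat : R < Rhat) :
    0 ≤ t (R + 1) - (1 / (R : ℝ)) * ∑ j ∈ Finset.Icc 1 R, t j ∧
    (1 - (R : ℝ) / (Rhat : ℝ)) *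
        (t (R + 1) - (1 / (R : ℝ)) * ∑ j ∈ Finset.Icc 1 R, t j)
      - (1 / (Rhat : ℝ)) * |∑ j ∈ Finset.Icc 1 Rhat, (that j - t j)|
      ≤ |(1 / (Rhat : ℝ)) * ∑ j ∈ Finset.Icc 1 Rhat, that j
          - (1 / (R : ℝ)) * ∑ j ∈ Finset.Icc 1 R, t j| :=
  sorted_average_gap_lower_bound_general t that hmono R Rhat hR hRRhat
end

section
/- Let ξ₀₀, ξ₀₁, ξ₁₀, ξ₁₁ be positive real numbers and let f₁, f₂ : (0,1) → (0,∞) be non-increasing functions. Define Lfdr(x, y) = (ξ₀₀ + ξ₀₁ f₂(y) + ξ₁₀ f₁(x)) / (ξ₀₀ + ξ₀₁ f₂(y) + ξ₁₀ f₁(x) + ξ₁₁ f₁(x) f₂(y)) for (x, y) ∈ (0,1)². Then Lfdr is non-decreasing in x for each fixed y, and non-decreasing in y for each fixed x. -/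
/-! Write `N` for the numerator, so that `Lfdr = N / (N + ξ₁₁ f₁ f₂)`. Cross-multiplying, the
comparison at `f₁ = a' ≤ a` reduces to `0 ≤ ξ₁₁ f₂ (ξ₀₀ + ξ₀₁ f₂) (a - a')`; since `f₁` is
non-increasing this gives monotonicity in `x`, and monotonicity in `y` follows by exchanging the
roles of the two studies. -/

open Set

noncomputable def lfdrFormula (ξ₀₀ ξ₀₁ ξ₁₀ ξ₁₁ a b : ℝ) : ℝ :=
  (ξ₀₀ + ξ₀₁ * b + ξ₁₀ * a) / (ξ₀₀ + ξ₀₁ * b + ξ₁₀ * a + ξ₁₁ * a * b)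

section

variable {ξ₀₀ ξ₀₁ ξ₁₀ ξ₁₁ : ℝ}

lemma lfdrFormula_comm (a b : ℝ) :
    lfdrFormula ξ₀₀ ξ₀₁ ξ₁₀ ξ₁₁ a b = lfdrFormula ξ₀₀ ξ₁₀ ξ₀₁ ξ₁₁ b a := by
  unfold lfdrFormula
  congr 1 <;> ring

lemma lfdrFormula_antitoneOn_left (h00 : 0 < ξ₀₀) (h01 : 0 ≤ ξ₀₁) (h10 : 0 ≤ ξ₁₀)
    (h11 : 0 ≤ ξ₁₁) {b : ℝ} (hb : 0 ≤ b) :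
    AntitoneOn (fun a => lfdrFormula ξ₀₀ ξ₀₁ ξ₁₀ ξ₁₁ a b) (Ici 0) := by
  intro a' (ha' : 0 ≤ a') a (ha : 0 ≤ a) h
  have hc : 0 ≤ ξ₀₀ + ξ₀₁ * b := by positivity
  unfold lfdrFormula
  rw [div_le_div_iff₀ (by positivity) (by positivity)]
  nlinarith [mul_nonneg (mul_nonneg (mul_nonneg h11 hb) hc) (sub_nonneg.2 h)]

lemma lfdrFormula_antitoneOn_right (h00 : 0 < ξ₀₀) (h01 : 0 ≤ ξ₀₁) (h10 : 0 ≤ ξ₁₀)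
    (h11 : 0 ≤ ξ₁₁) {a : ℝ} (ha : 0 ≤ a) :
    AntitoneOn (fun b => lfdrFormula ξ₀₀ ξ₀₁ ξ₁₀ ξ₁₁ a b) (Ici 0) := by
  simpa only [lfdrFormula_comm a] using lfdrFormula_antitoneOn_left h00 h10 h01 h11 ha

end

/-- Monotonicity of the local false discovery rate: with positive mixture weights
`ξ₀₀, ξ₀₁, ξ₁₀, ξ₁₁` and non-increasing positive non-null densities `f₁, f₂` on (0,1),
`Lfdr(x,y) = (ξ₀₀ + ξ₀₁ f₂(y) + ξ₁₀ f₁(x)) /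
             (ξ₀₀ + ξ₀₁ f₂(y) + ξ₁₀ f₁(x) + ξ₁₁ f₁(x) f₂(y))`
is non-decreasing in `x` for each fixed `y ∈ (0,1)` and non-decreasing in `y` for each
fixed `x ∈ (0,1)`. -/
theorem lfdr_monotone (ξ₀₀ ξ₀₁ ξ₁₀ ξ₁₁ : ℝ)
    (h00 : 0 < ξ₀₀) (h01 : 0 < ξ₀₁) (h10 : 0 < ξ₁₀) (h11 : 0 < ξ₁₁)
    (f₁ f₂ : ℝ → ℝ)
    (hf₁pos : ∀ x ∈ Set.Ioo (0 : ℝ) 1, 0 < f₁ x)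
    (hf₂pos : ∀ y ∈ Set.Ioo (0 : ℝ) 1, 0 < f₂ y)
    (hf₁mono : ∀ x ∈ Set.Ioo (0 : ℝ) 1, ∀ x' ∈ Set.Ioo (0 : ℝ) 1, x ≤ x' → f₁ x' ≤ f₁ x)
    (hf₂mono : ∀ y ∈ Set.Ioo (0 : ℝ) 1, ∀ y' ∈ Set.Ioo (0 : ℝ) 1, y ≤ y' → f₂ y' ≤ f₂ y)
    (Lfdr : ℝ → ℝ → ℝ)
    (hL : ∀ x y, Lfdr x y = (ξ₀₀ + ξ₀₁ * f₂ y + ξ₁₀ * f₁ x) /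
        (ξ₀₀ + ξ₀₁ * f₂ y + ξ₁₀ * f₁ x + ξ₁₁ * f₁ x * f₂ y)) :
    (∀ y ∈ Set.Ioo (0 : ℝ) 1, ∀ x ∈ Set.Ioo (0 : ℝ) 1, ∀ x' ∈ Set.Ioo (0 : ℝ) 1,
      x ≤ x' → Lfdr x y ≤ Lfdr x' y) ∧
    (∀ x ∈ Set.Ioo (0 : ℝ) 1, ∀ y ∈ Set.Ioo (0 : ℝ) 1, ∀ y' ∈ Set.Ioo (0 : ℝ) 1,
      y ≤ y' → Lfdr x y ≤ Lfdr x y') := by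
  obtain rfl : Lfdr = fun x y => lfdrFormula ξ₀₀ ξ₀₁ ξ₁₀ ξ₁₁ (f₁ x) (f₂ y) :=
    funext fun x => funext fun y => hL x y
  refine ⟨fun y hy x hx x' hx' hxx => ?_, fun x hx y hy y' hy' hyy => ?_⟩
  · exact lfdrFormula_antitoneOn_left h00 h01.le h10.le h11.le (hf₂pos y hy).le
      (mem_Ici.2 (hf₁pos x' hx').le) (mem_Ici.2 (hf₁pos x hx).le) (hf₁mono x hx x' hx' hxx)
  · exact lfdrFormula_antitoneOn_right h00 h01.le h10.le h11.le (hf₁pos x hx).le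
      (mem_Ici.2 (hf₂pos y' hy').le) (mem_Ici.2 (hf₂pos y hy).le) (hf₂mono y hy y' hy' hyy)
end
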